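/- If there exists a nonzero Banach space Y such that every uniformly p-convergent subset of W(X,Y) is weakly equicompact, then every p-convergent operator from X to Y is compact, i.e., C_p(X,Y) = K(X,Y). -/

import Mathlib

open Filter Topology Metric Bornology ENNReal

noncomputable section

universe u v w

variable {X : Type*} {Y : Type*} {Z : Type*}

section Defs
variable [NormedAddCommGroup X] [NormedSpace ℝ X]
variable [NormedAddCommGroup Y] [NormedSpace ℝ Y]

/-- A sequence is weakly `p`-summable if `(x*(xₙ))ₙ ∈ ℓ_p` for every functional `x*`;
for `p = ∞` we use weakly null sequences. -/
def WeaklyPSummable (p : ℝ≥0∞) (x : ℕ → X) : Prop :=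
  if p = ⊤ then ∀ f : X →L[ℝ] ℝ, Tendsto (fun n => f (x n)) atTop (𝓝 0)
  else ∀ f : X →L[ℝ] ℝ, Memℓp (fun n => f (x n)) p

/-- A set of operators is uniformly `p`-convergent if every weakly `p`-summable
sequence converges to `0` uniformly on the set. -/
def UnifPConvergent (p : ℝ≥0∞) (K : Set (X →L[ℝ] Y)) : Prop :=
  ∀ x : ℕ → X, WeaklyPSummable p x →
    ∀ ε > (0 : ℝ), ∃ N : ℕ, ∀ n ≥ N, ∀ T ∈ K, ‖T (x n)‖ < ε

/-- A `p`-convergent operator maps weakly `p`-summable sequences to norm-null sequences. -/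
def PConvergentOp (p : ℝ≥0∞) (T : X →L[ℝ] Y) : Prop :=
  ∀ x : ℕ → X, WeaklyPSummable p x → Tendsto (fun n => ‖T (x n)‖) atTop (𝓝 0)

/-- A sequence is weakly `p`-Cauchy if all differences along pairs of increasing
index sequences are weakly `p`-summable. -/
def WeaklyPCauchy (p : ℝ≥0∞) (x : ℕ → X) : Prop :=
  ∀ m k : ℕ → ℕ, StrictMono m → StrictMono k →
    WeaklyPSummable p (fun n => x (m n) - x (k n))

/-- A set is weakly `p`-precompact if every sequence in it has a weakly `p`-Cauchy
subsequence. -/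
def WeaklyPPrecompact (p : ℝ≥0∞) (A : Set X) : Prop :=
  ∀ x : ℕ → X, (∀ n, x n ∈ A) →
    ∃ s : ℕ → ℕ, StrictMono s ∧ WeaklyPCauchy p (fun n => x (s n))

/-- `B` is `U`-bounded: bounded and with positive distance to the boundary of `U`. -/
def UBounded (U B : Set X) : Prop :=
  IsBounded B ∧ B ⊆ U ∧ ∃ d > (0 : ℝ), ∀ x ∈ B, ball x d ⊆ U

/-- A set of operators is equicompact if every bounded sequence has a subsequence on
which the operators converge in norm, uniformly on the set. -/
def Equicompact (M : Set (X →L[ℝ] Y)) : Prop :=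
  ∀ x : ℕ → X, IsBounded (Set.range x) →
    ∃ s : ℕ → ℕ, StrictMono s ∧ ∃ g : (X →L[ℝ] Y) → Y,
      TendstoUniformlyOn (fun n T => T (x (s n))) g atTop M

/-- A set of operators is weakly equicompact if every bounded sequence has a
subsequence on which the operators converge weakly, uniformly on the set. -/
def WeaklyEquicompact (M : Set (X →L[ℝ] Y)) : Prop :=
  ∀ x : ℕ → X, IsBounded (Set.range x) →
    ∃ s : ℕ → ℕ, StrictMono s ∧ ∀ φ : Y →L[ℝ] ℝ, ∃ c : (X →L[ℝ] Y) → ℝ,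
      TendstoUniformlyOn (fun n T => φ (T (x (s n)))) c atTop M

/-- A weakly compact operator: the image of every bounded sequence has a weakly
convergent subsequence. -/
def WeaklyCompactOp (T : X →L[ℝ] Y) : Prop :=
  ∀ x : ℕ → X, IsBounded (Set.range x) →
    ∃ s : ℕ → ℕ, StrictMono s ∧ ∃ y : Y,
      ∀ φ : Y →L[ℝ] ℝ, Tendsto (fun n => φ (T (x (s n)))) atTop (𝓝 (φ y))

/-- A space has the `p`-Schur property if weakly `p`-summable sequences are norm null. -/
def PSchur (p : ℝ≥0∞) (W : Type*) [NormedAddCommGroup W] [NormedSpace ℝ W] : Prop :=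
  ∀ x : ℕ → W, WeaklyPSummable p x → Tendsto (fun n => ‖x n‖) atTop (𝓝 0)

/-- A set is relatively weakly `p`-compact if every sequence in it has a subsequence
weakly `p`-convergent to a point of the space. -/
def RelWeaklyPCompact (p : ℝ≥0∞) (A : Set X) : Prop :=
  ∀ x : ℕ → X, (∀ n, x n ∈ A) →
    ∃ s : ℕ → ℕ, StrictMono s ∧ ∃ a : X, WeaklyPSummable p (fun n => x (s n) - a)

/-- `f` is weakly `p`-sequentially continuous on `U` if it maps `U`-bounded weakly
`p`-Cauchy sequences to norm convergent sequences. -/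
def WeaklyPSeqContinuous (p : ℝ≥0∞) (U : Set X) (f : X → Y) : Prop :=
  ∀ x : ℕ → X, (∀ n, x n ∈ U) → UBounded U (Set.range x) → WeaklyPCauchy p x →
    ∃ y : Y, Tendsto (fun n => f (x n)) atTop (𝓝 y)

end Defs

/-!
A `p`-convergent `T : X → Y` becomes a compact operator once tested against the rank-one
operators `x ↦ φ (T x) • y₀` with `‖φ‖ ≤ 1` and a fixed `y₀ ≠ 0`: these are compact, hence weakly
compact, and they form a uniformly `p`-convergent set because `‖φ (T x) • y₀‖ ≤ ‖y₀‖ ‖T x‖`.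
Weak equicompactness, read through one functional `ψ` with `ψ y₀ = 1`, says that along a
subsequence of a bounded `(xₙ)` the scalars `φ (T xₙ)` converge uniformly in `φ` from the dual
unit ball, i.e. `(T xₙ)` is norm Cauchy. Conversely, compact operators send weakly null
sequences, in particular weakly `p`-summable ones, to norm null sequences.
-/

open Set

section DualBall

variable {𝕜 E F : Type*} [RCLike 𝕜] [NormedAddCommGroup E] [NormedSpace 𝕜 E]
  [NormedAddCommGroup F] [NormedSpace 𝕜 F]

lemma isBounded_range_of_forall_dual_isBounded {x : ℕ → E}
    (hx : ∀ f : StrongDual 𝕜 E, IsBounded (range fun n => f (x n))) : IsBounded (range x) := by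
  obtain ⟨C, hC⟩ := banach_steinhaus (g := fun n => NormedSpace.inclusionInDoubleDual 𝕜 E (x n))
    fun f => (isBounded_iff_forall_norm_le.1 (hx f)).imp fun _ hC n => hC _ (mem_range_self n)
  refine isBounded_iff_forall_norm_le.2 ⟨C, ?_⟩
  rintro _ ⟨n, rfl⟩
  rw [← (NormedSpace.inclusionInDoubleDualLi 𝕜).norm_map (x n)]
  exact hC n

lemma IsCompactOperator.tendsto_zero_of_forall_dual_tendsto_zero {T : E →L[𝕜] F}
    (hT : IsCompactOperator T) {x : ℕ → E}
    (hx : ∀ f : StrongDual 𝕜 E, Tendsto (fun n => f (x n)) atTop (𝓝 0)) :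
    Tendsto (fun n => T (x n)) atTop (𝓝 0) := by
  have hb := isBounded_range_of_forall_dual_isBounded fun f => isBounded_range_of_tendsto _ (hx f)
  obtain ⟨K, hK, hTK⟩ := hT.image_subset_compact_of_bounded hb
  refine hK.tendsto_nhds_of_unique_mapClusterPt
    (Eventually.of_forall fun n => hTK (mem_image_of_mem T (mem_range_self n))) fun a _ ha => ?_
  obtain ⟨s, hs, hlim⟩ := ha.tendsto_subseq
  exact SeparatingDual.eq_zero_of_forall_dual_eq_zero (R := 𝕜) fun g =>
    tendsto_nhds_unique ((g.continuous.tendsto a).comp hlim)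
      ((hx (g.comp T)).comp hs.tendsto_atTop)

lemma cauchySeq_of_uniformCauchySeqOn_dual_closedBall {y : ℕ → F}
    (hy : UniformCauchySeqOn (fun n (φ : StrongDual 𝕜 F) => φ (y n)) atTop (closedBall 0 1)) :
    CauchySeq y := by
  rw [Metric.uniformCauchySeqOn_iff] at hy
  refine Metric.cauchySeq_iff.2 fun ε hε => ?_
  obtain ⟨N, hN⟩ := hy ε hε
  refine ⟨N, fun m hm n hn => ?_⟩
  obtain ⟨g, hg, hgy⟩ := exists_dual_vector'' 𝕜 (y m - y n)
  calc dist (y m) (y n) = ‖g (y m - y n)‖ := by rw [hgy, dist_eq_norm, RCLike.norm_ofReal, abs_norm]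
    _ = dist (g (y m)) (g (y n)) := by rw [map_sub, dist_eq_norm]
    _ < ε := hN m hm n hn g (mem_closedBall_zero_iff.2 hg)

end DualBall

lemma isCompactOperator_of_forall_exists_tendsto_subseq {𝕜 E F : Type*}
    [NontriviallyNormedField 𝕜] [NormedAddCommGroup E] [NormedSpace 𝕜 E]
    [NormedAddCommGroup F] [NormedSpace 𝕜 F] (T : E →L[𝕜] F)
    (hT : ∀ x : ℕ → E, IsBounded (range x) →
      ∃ s : ℕ → ℕ, StrictMono s ∧ ∃ y, Tendsto (fun n => T (x (s n))) atTop (𝓝 y)) :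
    IsCompactOperator T := by
  refine (isCompactOperator_iff_isCompact_closure_image_closedBall (T : E →ₗ[𝕜] F)
    zero_lt_one).2 (IsSeqCompact.isCompact fun u hu => ?_)
  have happrox : ∀ n : ℕ, ∃ w ∈ closedBall (0 : E) 1, dist (u n) (T w) < 1 / (n + 1) := by
    intro n
    obtain ⟨_, ⟨w, hw, rfl⟩, hd⟩ := Metric.mem_closure_iff.1 (hu n) _ Nat.one_div_pos_of_nat
    exact ⟨w, hw, hd⟩
  choose w hw hdw using happrox
  obtain ⟨s, hs, y, hy⟩ := hT w (isBounded_closedBall.subset (range_subset_iff.2 hw))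
  refine ⟨y, mem_closure_of_tendsto hy (Eventually.of_forall fun n => mem_image_of_mem T (hw _)),
    s, hs, hy.congr_dist ?_⟩
  refine squeeze_zero (fun n => dist_nonneg) (fun n => ?_)
    (tendsto_one_div_add_atTop_nhds_zero_nat.comp hs.tendsto_atTop)
  rw [dist_comm]
  exact (hdw (s n)).le

lemma Memℓp.tendsto_cofinite_zero {α E : Type*} [NormedAddCommGroup E] {p : ℝ≥0∞} {f : α → E}
    (hf : Memℓp f p) (hp : p ≠ ∞) : Tendsto f cofinite (𝓝 0) := by
  rcases eq_zero_or_pos p with rfl | hp0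
  · exact tendsto_nhds_of_eventually_eq <|
      mem_of_superset hf.finite_dsupport.compl_mem_cofinite fun _ hi => not_not.1 hi
  have hpr : 0 < p.toReal := ENNReal.toReal_pos hp0.ne' hp
  have h := (Real.continuousAt_rpow_const 0 p.toReal⁻¹ (Or.inr (inv_pos.2 hpr).le)).tendsto.comp
    (hf.summable hpr).tendsto_cofinite_zero
  rw [Real.zero_rpow (inv_ne_zero hpr.ne')] at h
  exact tendsto_zero_iff_norm_tendsto_zero.2
    (h.congr fun i => Real.rpow_rpow_inv (norm_nonneg _) hpr.ne')

section Operators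

variable [NormedAddCommGroup X] [NormedSpace ℝ X] [NormedAddCommGroup Y] [NormedSpace ℝ Y]
  [NormedAddCommGroup Z] [NormedSpace ℝ Z]

lemma WeaklyPSummable.tendsto_zero {p : ℝ≥0∞} {x : ℕ → X} (hx : WeaklyPSummable p x)
    (f : X →L[ℝ] ℝ) : Tendsto (fun n => f (x n)) atTop (𝓝 0) := by
  unfold WeaklyPSummable at hx
  split_ifs at hx with hp
  · exact hx f
  · simpa only [Nat.cofinite_eq_atTop] using (hx f).tendsto_cofinite_zero hp

lemma IsCompactOperator.pConvergentOp {T : X →L[ℝ] Y} (hT : IsCompactOperator T)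
    (p : ℝ≥0∞) : PConvergentOp p T := fun _ hx =>
  tendsto_zero_iff_norm_tendsto_zero.1
    (hT.tendsto_zero_of_forall_dual_tendsto_zero hx.tendsto_zero)

lemma IsCompactOperator.weaklyCompactOp {T : X →L[ℝ] Y} (hT : IsCompactOperator T) :
    WeaklyCompactOp T := by
  intro x hx
  obtain ⟨K, hK, hTK⟩ := hT.image_subset_compact_of_bounded hx
  obtain ⟨y, -, s, hs, hy⟩ := hK.tendsto_subseq fun n => hTK (mem_image_of_mem T (mem_range_self n))
  exact ⟨s, hs, y, fun φ => (φ.continuous.tendsto y).comp hy⟩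

lemma unifPConvergent_of_norm_le_mul {p : ℝ≥0∞} {T : X →L[ℝ] Z} (hT : PConvergentOp p T)
    {M : Set (X →L[ℝ] Y)} (C : ℝ) (hM : ∀ S ∈ M, ∀ x, ‖S x‖ ≤ C * ‖T x‖) :
    UnifPConvergent p M := by
  intro x hx ε hε
  have hC : Tendsto (fun n => C * ‖T (x n)‖) atTop (𝓝 0) := by
    simpa using (hT x hx).const_mul C
  obtain ⟨N, hN⟩ := (hC.eventually (gt_mem_nhds hε)).exists_forall_of_atTop
  exact ⟨N, fun n hn S hS => (hM S hS _).trans_lt (hN n hn)⟩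

def rankOneOfDualBall (T : X →L[ℝ] Y) (y : Z) : Set (X →L[ℝ] Z) :=
  (fun φ : StrongDual ℝ Y => (ContinuousLinearMap.toSpanSingleton ℝ y).comp (φ.comp T)) ''
    closedBall 0 1

lemma isCompactOperator_of_mem_rankOneOfDualBall {T : X →L[ℝ] Y} {y : Z} {S : X →L[ℝ] Z}
    (hS : S ∈ rankOneOfDualBall T y) : IsCompactOperator S := by
  obtain ⟨φ, -, rfl⟩ := hS
  exact (isCompactOperator_of_locallyCompactSpace_rng
    (ContinuousLinearMap.toSpanSingleton ℝ y)).comp_clm (φ.comp T)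

lemma norm_apply_le_of_mem_rankOneOfDualBall {T : X →L[ℝ] Y} {y : Z} {S : X →L[ℝ] Z}
    (hS : S ∈ rankOneOfDualBall T y) (x : X) : ‖S x‖ ≤ ‖y‖ * ‖T x‖ := by
  obtain ⟨φ, hφ, rfl⟩ := hS
  have hφx : ‖φ (T x)‖ ≤ ‖T x‖ := by
    simpa using φ.le_of_opNorm_le (mem_closedBall_zero_iff.1 hφ) (T x)
  calc ‖φ (T x) • y‖ = ‖φ (T x)‖ * ‖y‖ := norm_smul _ _
    _ ≤ ‖y‖ * ‖T x‖ := by rw [mul_comm]; gcongr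

lemma WeaklyEquicompact.exists_cauchySeq_subseq {T : X →L[ℝ] Y} {y : Z}
    (hM : WeaklyEquicompact (rankOneOfDualBall T y)) (hy : y ≠ 0) {x : ℕ → X}
    (hx : IsBounded (range x)) :
    ∃ s : ℕ → ℕ, StrictMono s ∧ CauchySeq fun n => T (x (s n)) := by
  obtain ⟨s, hs, hconv⟩ := hM x hx
  obtain ⟨ψ, hψy⟩ := SeparatingDual.exists_eq_one (R := ℝ) hy
  obtain ⟨c, hc⟩ := hconv ψ
  refine ⟨s, hs, cauchySeq_of_uniformCauchySeqOn_dual_closedBall (𝕜 := ℝ) ?_⟩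
  have hball := (hc.comp _).mono (subset_preimage_image
    (fun φ : StrongDual ℝ Y => (ContinuousLinearMap.toSpanSingleton ℝ y).comp (φ.comp T))
    (closedBall 0 1))
  convert hball.uniformCauchySeqOn using 1
  ext n φ
  simp [hψy]

end Operators

theorem stmt13_general [NormedAddCommGroup X] [NormedSpace ℝ X]
    [NormedAddCommGroup Y] [NormedSpace ℝ Y] [CompleteSpace Y] [Nontrivial Y]
    (p : ℝ≥0∞)
    (h : ∀ M : Set (X →L[ℝ] Y), (∀ T ∈ M, WeaklyCompactOp T) →
      UnifPConvergent p M → WeaklyEquicompact M) :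
    {T : X →L[ℝ] Y | PConvergentOp p T} = {T : X →L[ℝ] Y | IsCompactOperator T} := by
  ext T
  refine ⟨fun hT => ?_, fun hT => hT.pConvergentOp p⟩
  obtain ⟨y, hy⟩ := exists_ne (0 : Y)
  have hM : WeaklyEquicompact (rankOneOfDualBall T y) :=
    h _ (fun _ hS => (isCompactOperator_of_mem_rankOneOfDualBall hS).weaklyCompactOp)
      (unifPConvergent_of_norm_le_mul hT ‖y‖ fun _ hS => norm_apply_le_of_mem_rankOneOfDualBall hS)
  refine isCompactOperator_of_forall_exists_tendsto_subseq T fun x hx => ?_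
  obtain ⟨s, hs, hcauchy⟩ := hM.exists_cauchySeq_subseq hy hx
  exact ⟨s, hs, cauchySeq_tendsto_of_complete hcauchy⟩

/-- If there is a nonzero Banach space `Y` such that every uniformly
`p`-convergent subset of `W(X,Y)` is weakly equicompact, then `C_p(X,Y) = K(X,Y)`. -/
theorem stmt13 [NormedAddCommGroup X] [NormedSpace ℝ X] [CompleteSpace X]
    [NormedAddCommGroup Y] [NormedSpace ℝ Y] [CompleteSpace Y] [Nontrivial Y]
    (p : ℝ≥0∞) (hp : 1 ≤ p) (hp' : p ≠ ⊤)
    (h : ∀ M : Set (X →L[ℝ] Y), (∀ T ∈ M, WeaklyCompactOp T) →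
      UnifPConvergent p M → WeaklyEquicompact M) :
    {T : X →L[ℝ] Y | PConvergentOp p T} = {T : X →L[ℝ] Y | IsCompactOperator T} :=
  stmt13_general p h
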